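/- Let R be a commutative semilocal ring such that every prime ideal of R is a direct sum of cyclic R-modules. Then R is a Noetherian ring if and only if every maximal ideal of R is finitely generated. -/

import Mathlib

/-- An ideal `P` of a commutative ring `R` is an internal direct sum of cyclic
`R`-modules: there is a family of elements of `P` whose cyclic spans are
independent and whose supremum is `P`. -/
def IsDirectSumOfCyclics {R : Type} [CommRing R] (P : Ideal R) : Prop :=
  ∃ (ι : Type) (w : ι → R), (∀ i, w i ∈ P) ∧
    iSupIndep (fun i => Ideal.span {w i}) ∧ (⨆ i, Ideal.span {w i}) = P

/-!
By Cohen's theorem it suffices that every prime `P` is finitely generated. Write `P = ⨁ R wᵢ` and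
suppose infinitely many `wᵢ` are nonzero. For a maximal `M ⊇ P`, the summands of a finite
decomposition of `M` multiply to zero pairwise, so all but one generator `u` lie in `P`:
`M ⊆ Q + R u` with `Q ⊆ P` finitely generated and `u ∉ P`. As `Q` meets only finitely many
summands of `P`, every other `wᵢ` is killed by some `1 - c u ∉ M`. Since there are finitely many
maximal ideals, almost all `i` satisfy `R wᵢ + ann(wᵢ) = R`, so `R wᵢ` is generated by an
idempotent; these idempotents are nonzero and pairwise orthogonal, and a semilocal ring has only
finitely many of those.
-/

open Ideal

section

variable {R : Type} [CommRing R]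

theorem IsIdempotentElem.exists_isMaximal_notMem {e : R} (he : IsIdempotentElem e) (h0 : e ≠ 0) :
    ∃ M : Ideal R, M.IsMaximal ∧ e ∉ M := by
  by_contra! hmem
  have hunit : IsUnit (1 - e) := by
    by_contra hnu
    obtain ⟨M, hM, h1e⟩ := exists_max_ideal_of_mem_nonunits hnu
    exact hM.ne_top ((eq_top_iff_one M).2 (by simpa using M.add_mem h1e (hmem M hM)))
  exact h0 (hunit.mul_left_eq_zero.1 (by rw [mul_sub, mul_one, he.eq, sub_self]))

theorem OrthogonalIdempotents.finite_setOf_ne_zero {ι : Type*} {e : ι → R}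
    (hsemi : {M : Ideal R | M.IsMaximal}.Finite) (he : OrthogonalIdempotents e) :
    {i | e i ≠ 0}.Finite := by
  have hsub : ∀ M : Ideal R, M.IsMaximal → {i | e i ∉ M}.Subsingleton := by
    intro M hM i hi j hj
    by_contra hij
    rcases hM.isPrime.mem_or_mem (he.ortho hij ▸ M.zero_mem) with h | h
    exacts [hi h, hj h]
  refine (hsemi.biUnion fun M hM => (hsub M hM).finite).subset fun i hi => ?_
  obtain ⟨M, hM, hiM⟩ := (he.idem i).exists_isMaximal_notMem hi
  exact Set.mem_biUnion hM hiM

theorem Ideal.exists_isIdempotentElem_eq_span_of_sup_annihilator_eq_top {I : Ideal R}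
    (hI : I.FG) (h : I ⊔ Submodule.annihilator I = ⊤) :
    ∃ e : R, IsIdempotentElem e ∧ I = span {e} := by
  refine (I.isIdempotentElem_iff_of_fg hI).1 ?_
  calc I * I = I * I ⊔ I * Submodule.annihilator I := by
        rw [Submodule.mul_annihilator, sup_bot_eq]
    _ = I := by rw [← mul_sup, h, mul_top]

theorem finite_setOf_ne_zero_of_sup_annihilator_eq_top {ι : Type*} {w : ι → R}
    (hsemi : {M : Ideal R | M.IsMaximal}.Finite) (hw : Pairwise fun i j => w i * w j = 0)
    (htop : ∀ i, span {w i} ⊔ Submodule.annihilator (span {w i}) = ⊤) :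
    {i | w i ≠ 0}.Finite := by
  choose e he hspan using fun i =>
    exists_isIdempotentElem_eq_span_of_sup_annihilator_eq_top (I := span {w i})
      (Submodule.fg_span_singleton _) (htop i)
  have hortho : OrthogonalIdempotents e := by
    refine ⟨he, fun i j hij => ?_⟩
    obtain ⟨a, ha⟩ := mem_span_singleton'.1 (hspan i ▸ mem_span_singleton_self (e i))
    obtain ⟨b, hb⟩ := mem_span_singleton'.1 (hspan j ▸ mem_span_singleton_self (e j))
    rw [← ha, ← hb, mul_mul_mul_comm, hw hij, mul_zero]
  convert hortho.finite_setOf_ne_zero hsemi using 3 with i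
  rw [ne_eq, ne_eq, ← span_singleton_eq_bot, hspan, span_singleton_eq_bot]

section IndependentCyclics

variable {ι : Type*} {w : ι → R}

theorem fg_iSup_span_singleton_of_finite (hfin : {i | w i ≠ 0}.Finite) :
    (⨆ i, span {w i}).FG := by
  rw [← Submodule.span_range_eq_iSup, ← Submodule.span_sdiff_singleton_zero]
  refine Submodule.fg_span <| (hfin.image w).subset ?_
  rintro _ ⟨⟨i, rfl⟩, h0⟩
  exact ⟨i, h0, rfl⟩

theorem mul_eq_zero_of_iSupIndep_span_singleton (hind : iSupIndep fun i => span {w i})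
    {i j : ι} (hij : i ≠ j) : w i * w j = 0 :=
  Submodule.disjoint_def.1 (hind.pairwiseDisjoint hij) _
    (mul_mem_right _ _ (mem_span_singleton_self _)) (mul_mem_left _ _ (mem_span_singleton_self _))

theorem iSup_span_singleton_le_sup_annihilator (hind : iSupIndep fun i => span {w i}) (i : ι) :
    ⨆ j, span {w j} ≤ span {w i} ⊔ Submodule.annihilator (span {w i}) := by
  refine iSup_le fun j => ?_
  rcases eq_or_ne j i with rfl | hji
  · exact le_sup_left
  · refine le_sup_of_le_right (span_singleton_le_iff_mem _ |>.2 ?_)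
    exact (Submodule.mem_annihilator_span_singleton _ _).2
      (mul_eq_zero_of_iSupIndep_span_singleton hind hji)

theorem exists_finset_forall_span_singleton_sup_annihilator_eq_top
    (hind : iSupIndep fun i => span {w i}) {P : Ideal R} [hPp : P.IsPrime]
    (hP : ⨆ i, span {w i} = P) {Q : Ideal R} (hQ : Q.FG) (hQP : Q ≤ P) {u : R} (hu : u ∉ P)
    (hPQu : P ≤ Q ⊔ span {u}) :
    ∃ s : Finset ι, ∀ i ∉ s, span {u} ⊔ Submodule.annihilator (span {w i}) = ⊤ := by
  obtain ⟨s, hs⟩ := CompleteLattice.IsCompactElement.exists_finset_of_le_iSup _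
    ((Submodule.fg_iff_compact Q).1 hQ) _ (hQP.trans hP.ge)
  refine ⟨s, fun i hi => ?_⟩
  have hsC : ⨆ j ∈ s, span {w j} ≤ ⨆ j, ⨆ (_ : j ≠ i), span {w j} :=
    biSup_mono fun j hj => ne_of_mem_of_not_mem hj hi
  have hPsplit : P ≤ span {w i} ⊔ ⨆ j, ⨆ (_ : j ≠ i), span {w j} :=
    hP ▸ (iSup_split_single _ i).le
  have hwi : w i ∈ P := hP ▸ Submodule.mem_iSup_of_mem i (mem_span_singleton_self _)
  -- Write `w i = q + r u`; then `r ∈ P`, and splitting `r = c w i + r'` along `P = ⨁ R w j`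
  -- puts `(1 - c u) w i = q + r' u` in the summands other than `R w i`, so it vanishes.
  obtain ⟨q, hq, _, hru, hqr⟩ := Submodule.mem_sup.1 (hPQu hwi)
  obtain ⟨r, rfl⟩ := mem_span_singleton'.1 hru
  have hr : r ∈ P :=
    (hPp.mem_or_mem (eq_sub_of_add_eq' hqr ▸ P.sub_mem hwi (hQP hq))).resolve_right hu
  obtain ⟨_, hc, r', hr', hcr⟩ := Submodule.mem_sup.1 (hPsplit hr)
  obtain ⟨c, rfl⟩ := mem_span_singleton'.1 hc
  have hkill : (1 - c * u) * w i = 0 := by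
    refine Submodule.disjoint_def.1 (hind i) _ (mul_mem_left _ _ (mem_span_singleton_self _)) ?_
    rw [show (1 - c * u) * w i = q + r' * u by linear_combination (-1) * hqr - u * hcr]
    exact add_mem (hsC (hs hq)) (mul_mem_right _ _ hr')
  rw [eq_top_iff_one, Submodule.mem_sup]
  exact ⟨c * u, mem_span_singleton'.2 ⟨c, rfl⟩, 1 - c * u,
    (Submodule.mem_annihilator_span_singleton _ _).2 hkill, by ring⟩


theorem IsDirectSumOfCyclics.exists_fg_le_sup_span_singleton {M P : Ideal R} [hPp : P.IsPrime]
    (hM : IsDirectSumOfCyclics M) (hMfg : M.FG) (hMP : ¬M ≤ P) :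
    ∃ Q : Ideal R, Q.FG ∧ Q ≤ P ∧ ∃ u ∈ M, u ∉ P ∧ M ≤ Q ⊔ span {u} := by
  classical
  obtain ⟨κ, u, huM, hind, hsup⟩ := hM
  obtain ⟨t, ht⟩ := CompleteLattice.IsCompactElement.exists_finset_of_le_iSup _
    ((Submodule.fg_iff_compact M).1 hMfg) _ hsup.ge
  obtain ⟨k, hk⟩ : ∃ k, u k ∉ P := by
    by_contra! hle
    exact hMP (hsup ▸ iSup_le fun k => (span_singleton_le_iff_mem _).2 (hle k))
  refine ⟨⨆ l ∈ t.erase k, span {u l},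
    Submodule.fg_biSup _ _ fun _ _ => Submodule.fg_span_singleton _,
    iSup₂_le fun l hl => (span_singleton_le_iff_mem _).2 ?_, u k, huM k, hk,
    ht.trans (iSup₂_le fun l hl => ?_)⟩
  · have hlk := mul_eq_zero_of_iSupIndep_span_singleton hind (Finset.ne_of_mem_erase hl)
    exact (hPp.mem_or_mem (hlk ▸ P.zero_mem)).resolve_right hk
  · rcases eq_or_ne l k with rfl | hlk
    · exact le_sup_right
    · exact le_sup_of_le_left (le_biSup (fun l => span {u l}) (Finset.mem_erase.2 ⟨hlk, hl⟩))

theorem exists_finset_forall_not_annihilator_le (hind : iSupIndep fun i => span {w i})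
    {P M : Ideal R} [P.IsPrime] (hP : ⨆ i, span {w i} = P)
    (hM : M.IsMaximal) (hPM : P ≤ M) (hMds : IsDirectSumOfCyclics M) (hMfg : M.FG)
    (hMP : ¬M ≤ P) :
    ∃ s : Finset ι, ∀ i ∉ s, ¬Submodule.annihilator (span {w i}) ≤ M := by
  obtain ⟨Q, hQ, hQP, u, huM, huP, hMQ⟩ := hMds.exists_fg_le_sup_span_singleton hMfg hMP
  obtain ⟨s, hs⟩ :=
    exists_finset_forall_span_singleton_sup_annihilator_eq_top hind hP hQ hQP huP (hPM.trans hMQ)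
  refine ⟨s, fun i hi hle => hM.ne_top (top_le_iff.1 ?_)⟩
  rw [← hs i hi]
  exact sup_le ((span_singleton_le_iff_mem _).2 huM) hle

end IndependentCyclics

theorem Ideal.IsPrime.fg_of_isDirectSumOfCyclics (hsemi : {M : Ideal R | M.IsMaximal}.Finite)
    (hmax : ∀ M : Ideal R, M.IsMaximal → M.FG)
    (hmaxds : ∀ M : Ideal R, M.IsMaximal → IsDirectSumOfCyclics M) {P : Ideal R}
    (hP : P.IsPrime) (hPds : IsDirectSumOfCyclics P) : P.FG := by
  by_contra hPfg
  obtain ⟨ι, w, -, hind, hsup⟩ := hPds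
  have key (M : {M : Ideal R // M.IsMaximal ∧ P ≤ M}) :
      ∃ s : Finset ι, ∀ i ∉ s, ¬Submodule.annihilator (span {w i}) ≤ M.1 :=
    exists_finset_forall_not_annihilator_le hind hsup M.2.1 M.2.2 (hmaxds _ M.2.1) (hmax _ M.2.1)
      fun hMP => hPfg (le_antisymm M.2.2 hMP ▸ hmax _ M.2.1)
  choose s hs using key
  have : Finite {M : Ideal R // M.IsMaximal ∧ P ≤ M} :=
    (hsemi.subset fun _ hM => hM.1).to_subtype
  set F := ⋃ M, (s M : Set ι)
  have hF : F.Finite := Set.finite_iUnion fun M => (s M).finite_toSet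
  have htop (i : {i // i ∉ F}) : span {w i} ⊔ Submodule.annihilator (span {w i}) = ⊤ := by
    by_contra hne
    obtain ⟨M, hM, hle⟩ := exists_le_maximal _ hne
    have hPM : P ≤ M := hsup ▸ (iSup_span_singleton_le_sup_annihilator hind i).trans hle
    exact hs ⟨M, hM, hPM⟩ i (fun h => i.2 (Set.mem_iUnion.2 ⟨_, h⟩)) (le_sup_right.trans hle)
  have hfin := finite_setOf_ne_zero_of_sup_annihilator_eq_top hsemi
    (fun i j hij => mul_eq_zero_of_iSupIndep_span_singleton hind (Subtype.coe_ne_coe.2 hij)) htop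
  refine hPfg (hsup ▸ fg_iSup_span_singleton_of_finite ?_)
  refine (hF.union (hfin.image Subtype.val)).subset fun i hi => ?_
  by_cases hiF : i ∈ F
  · exact Or.inl hiF
  · exact Or.inr ⟨⟨i, hiF⟩, hi, rfl⟩

end

theorem noetherian_iff_maximals_fg
    {R : Type} [CommRing R]
    (hsemi : {I : Ideal R | I.IsMaximal}.Finite)
    (h : ∀ P : Ideal R, P.IsPrime → IsDirectSumOfCyclics P) :
    IsNoetherianRing R ↔ ∀ M : Ideal R, M.IsMaximal → M.FG :=
  ⟨fun _ M _ => IsNoetherian.noetherian M, fun hmax => IsNoetherianRing.of_prime fun P hP =>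
    hP.fg_of_isDirectSumOfCyclics hsemi hmax (fun M hM => h M hM.isPrime) (h P hP)⟩
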